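/- The Demazure–Lusztig operators T_i on Q(q,t)[x_1^{±1},...,x_n^{±1}] satisfy the braid relations: T_i T_{i+1} T_i = T_{i+1} T_i T_{i+1} for 1 ≤ i ≤ n−2, and T_i T_j = T_j T_i for |i−j| > 1. -/

import Mathlib

noncomputable section

/-- The field `ℚ(q,t)`. -/
abbrev Qqt : Type := RatFunc (RatFunc ℚ)

/-- The variable `t` of `ℚ(q,t)`. -/
noncomputable def tt : Qqt := RatFunc.X

/-- The field of fractions of `ℚ(q,t)[x_1,…,x_n]`, containing the Laurent polynomial ring
`ℚ(q,t)[x_1^{±1},…,x_n^{±1}]`. -/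
abbrev KK (n : ℕ) : Type := FractionRing (MvPolynomial (Fin n) Qqt)

/-- The variable `x_i` inside the fraction field. -/
noncomputable def xv {n : ℕ} (i : Fin n) : KK n :=
  algebraMap (MvPolynomial (Fin n) Qqt) (KK n) (MvPolynomial.X i)

/-- The image of a scalar `c ∈ ℚ(q,t)` inside the fraction field. -/
noncomputable def cv {n : ℕ} (c : Qqt) : KK n :=
  algebraMap (MvPolynomial (Fin n) Qqt) (KK n) (MvPolynomial.C c)

/-- The operator `s_i` swapping the variables `x_i` and `x_{i+1}`. -/
noncomputable def sOp {n : ℕ} (i : ℕ) (h : i + 1 < n) : KK n ≃+* KK n :=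
  IsFractionRing.ringEquivOfRingEquiv
    (MvPolynomial.renameEquiv Qqt
      (Equiv.swap (⟨i, Nat.lt_of_succ_lt h⟩ : Fin n) ⟨i + 1, h⟩)).toRingEquiv

/-- The Demazure–Lusztig operator
`T_i f = s_i f + (1−t) x_i (f − s_i f)/(x_i − x_{i+1})`. -/
noncomputable def TOp {n : ℕ} (i : ℕ) (h : i + 1 < n) (f : KK n) : KK n :=
  sOp i h f + (1 - cv tt) * xv (⟨i, Nat.lt_of_succ_lt h⟩ : Fin n) * (f - sOp i h f) /
    (xv (⟨i, Nat.lt_of_succ_lt h⟩ : Fin n) - xv (⟨i + 1, h⟩ : Fin n))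

/-!
Expanding either side of a relation produces `f`, its images under words in the two
transpositions involved, and rational functions in the variables those transpositions move.
The transpositions satisfy the braid (resp. commutation) relation themselves, so both sides are
combinations of the same permuted copies of `f`, and the coefficients agree once the denominators
`(x_i - x_{i+1})(x_{i+1} - x_{i+2})(x_i - x_{i+2})` (resp. `(x_i - x_{i+1})(x_j - x_{j+1})`) are
cleared. Only the way `s_i` acts on the variables enters, so the identity holds for any field
automorphisms acting in this way.
-/

section DemazureLusztig

variable {K : Type*} [Field K]

def demazureLusztig (σ : K ≃+* K) (e a b g : K) : K :=
  σ g + e * a * (g - σ g) / (a - b)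

theorem demazureLusztig_braid (s u : K ≃+* K) {e a b c : K}
    (hsa : s a = b) (hsb : s b = a) (hsc : s c = c)
    (hua : u a = a) (hub : u b = c) (huc : u c = b)
    (hse : s e = e) (hue : u e = e) (hab : a ≠ b) (hbc : b ≠ c) (hac : a ≠ c)
    (hss : ∀ x, s (s x) = x) (huu : ∀ x, u (u x) = x)
    {f : K} (hf : s (u (s f)) = u (s (u f))) :
    demazureLusztig s e a b (demazureLusztig u e b c (demazureLusztig s e a b f)) =
      demazureLusztig u e b c (demazureLusztig s e a b (demazureLusztig u e b c f)) := by
  have := sub_ne_zero.mpr hab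
  have := sub_ne_zero.mpr hbc
  have := sub_ne_zero.mpr hac
  simp only [demazureLusztig, map_add, map_sub, map_mul, map_div₀,
    hsa, hsb, hsc, hua, hub, huc, hse, hue, hss, huu, hf]
  field_simp
  ring

theorem demazureLusztig_comm (s u : K ≃+* K) {e a b c d : K}
    (hsc : s c = c) (hsd : s d = d) (hua : u a = a) (hub : u b = b)
    (hse : s e = e) (hue : u e = e) (hab : a ≠ b) (hcd : c ≠ d)
    {f : K} (hf : s (u f) = u (s f)) :
    demazureLusztig s e a b (demazureLusztig u e c d f) =
      demazureLusztig u e c d (demazureLusztig s e a b f) := by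
  have := sub_ne_zero.mpr hab
  have := sub_ne_zero.mpr hcd
  simp only [demazureLusztig, map_add, map_sub, map_mul, map_div₀,
    hsc, hsd, hua, hub, hse, hue, hf]
  field_simp
  ring

end DemazureLusztig

theorem Equiv.swap_braid {α : Type*} [DecidableEq α] {a b c : α}
    (hab : a ≠ b) (hbc : b ≠ c) (hac : a ≠ c) :
    swap a b * swap b c * swap a b = swap b c * swap a b * swap b c :=
  calc swap a b * swap b c * swap a b = swap a c := by
        rw [swap_comm a b, swap_comm b c, swap_mul_swap_mul_swap hbc.symm hac.symm]
    _ = swap b c * swap a b * swap b c := by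
        rw [swap_mul_swap_mul_swap hab hac, swap_comm]

section PermutationAction

variable {n : ℕ}

def permOp (σ : Equiv.Perm (Fin n)) : KK n ≃+* KK n :=
  IsFractionRing.ringEquivOfRingEquiv (MvPolynomial.renameEquiv Qqt σ).toRingEquiv

theorem permOp_permOp (σ τ : Equiv.Perm (Fin n)) (x : KK n) :
    permOp σ (permOp τ x) = permOp (σ * τ) x := by
  rw [permOp, permOp, permOp, ← RingEquiv.trans_apply,
    ← IsFractionRing.ringEquivOfRingEquiv_comp]
  congr 2
  ext p
  simp [MvPolynomial.rename_rename]

theorem permOp_algebraMap (σ : Equiv.Perm (Fin n)) (p : MvPolynomial (Fin n) Qqt) :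
    permOp σ (algebraMap _ _ p) = algebraMap _ _ (MvPolynomial.rename σ p) :=
  IsFractionRing.ringEquivOfRingEquiv_algebraMap _ p

theorem permOp_xv (σ : Equiv.Perm (Fin n)) (j : Fin n) : permOp σ (xv j) = xv (σ j) := by
  rw [xv, permOp_algebraMap, MvPolynomial.rename_X, xv]

theorem permOp_cv (σ : Equiv.Perm (Fin n)) (c : Qqt) : permOp σ (cv c) = cv c := by
  rw [cv, permOp_algebraMap, MvPolynomial.rename_C]

theorem xv_injective : Function.Injective (xv : Fin n → KK n) :=
  (IsFractionRing.injective (MvPolynomial (Fin n) Qqt) (KK n)).comp MvPolynomial.X_injective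

theorem xv_mk_ne_xv_mk {k l : ℕ} (hk : k < n) (hl : l < n) (hkl : k ≠ l) :
    xv (⟨k, hk⟩ : Fin n) ≠ xv ⟨l, hl⟩ :=
  xv_injective.ne (Fin.ne_of_val_ne hkl)

theorem sOp_eq_permOp (i : ℕ) (h : i + 1 < n) :
    sOp i h = permOp (Equiv.swap ⟨i, Nat.lt_of_succ_lt h⟩ ⟨i + 1, h⟩) :=
  rfl

-- `(sOp i h).symm` unfolds to `sOp i h`, since `(swap a b).symm` is `swap a b` by definition.
theorem sOp_sOp (i : ℕ) (h : i + 1 < n) (x : KK n) : sOp i h (sOp i h x) = x :=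
  (sOp i h).apply_symm_apply x

theorem sOp_xv_left (i : ℕ) (h : i + 1 < n) :
    sOp i h (xv ⟨i, Nat.lt_of_succ_lt h⟩) = xv ⟨i + 1, h⟩ := by
  rw [sOp_eq_permOp, permOp_xv, Equiv.swap_apply_left]

theorem sOp_xv_right (i : ℕ) (h : i + 1 < n) :
    sOp i h (xv ⟨i + 1, h⟩) = xv ⟨i, Nat.lt_of_succ_lt h⟩ := by
  rw [sOp_eq_permOp, permOp_xv, Equiv.swap_apply_right]

theorem sOp_xv_of_ne (i : ℕ) (h : i + 1 < n) {k : ℕ} (hk : k < n) (hki : k ≠ i)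
    (hki' : k ≠ i + 1) : sOp i h (xv ⟨k, hk⟩) = xv ⟨k, hk⟩ := by
  rw [sOp_eq_permOp, permOp_xv,
    Equiv.swap_apply_of_ne_of_ne (Fin.ne_of_val_ne hki) (Fin.ne_of_val_ne hki')]

theorem sOp_one_sub_cv (i : ℕ) (h : i + 1 < n) (c : Qqt) : sOp i h (1 - cv c) = 1 - cv c := by
  rw [map_sub, map_one, sOp_eq_permOp, permOp_cv]

theorem sOp_braid (i : ℕ) (h : i + 2 < n) (f : KK n) :
    sOp i (Nat.lt_of_succ_lt h) (sOp (i + 1) h (sOp i (Nat.lt_of_succ_lt h) f)) =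
      sOp (i + 1) h (sOp i (Nat.lt_of_succ_lt h) (sOp (i + 1) h f)) := by
  simp only [sOp_eq_permOp, permOp_permOp]
  rw [← mul_assoc, ← mul_assoc, Equiv.swap_braid (by simp) (by simp) (by simp; omega)]

theorem sOp_comm (i j : ℕ) (hi : i + 1 < n) (hj : j + 1 < n) (hij : i + 1 < j ∨ j + 1 < i)
    (f : KK n) : sOp i hi (sOp j hj f) = sOp j hj (sOp i hi f) := by
  simp only [sOp_eq_permOp, permOp_permOp]
  rw [(Equiv.Perm.disjoint_swap_swap (by simp; omega)).commute.eq]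

theorem TOp_eq_demazureLusztig (i : ℕ) (h : i + 1 < n) :
    TOp i h = demazureLusztig (sOp i h) (1 - cv tt) (xv ⟨i, Nat.lt_of_succ_lt h⟩)
      (xv ⟨i + 1, h⟩) :=
  rfl

theorem TOp_braid (i : ℕ) (h : i + 2 < n) (f : KK n) :
    TOp i (Nat.lt_of_succ_lt h) (TOp (i + 1) h (TOp i (Nat.lt_of_succ_lt h) f)) =
      TOp (i + 1) h (TOp i (Nat.lt_of_succ_lt h) (TOp (i + 1) h f)) := by
  simp only [TOp_eq_demazureLusztig]
  exact demazureLusztig_braid _ _ (sOp_xv_left i _) (sOp_xv_right i _)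
    (sOp_xv_of_ne i _ h (by omega) (by omega)) (sOp_xv_of_ne (i + 1) h _ (by omega) (by omega))
    (sOp_xv_left (i + 1) h) (sOp_xv_right (i + 1) h) (sOp_one_sub_cv i _ tt)
    (sOp_one_sub_cv (i + 1) h tt) (xv_mk_ne_xv_mk _ _ (by omega))
    (xv_mk_ne_xv_mk _ _ (by omega)) (xv_mk_ne_xv_mk _ _ (by omega)) (sOp_sOp i _)
    (sOp_sOp (i + 1) h) (sOp_braid i h f)

theorem TOp_comm (i j : ℕ) (hi : i + 1 < n) (hj : j + 1 < n) (hij : i + 1 < j ∨ j + 1 < i)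
    (f : KK n) : TOp i hi (TOp j hj f) = TOp j hj (TOp i hi f) := by
  simp only [TOp_eq_demazureLusztig]
  exact demazureLusztig_comm _ _ (sOp_xv_of_ne i hi _ (by omega) (by omega))
    (sOp_xv_of_ne i hi _ (by omega) (by omega)) (sOp_xv_of_ne j hj _ (by omega) (by omega))
    (sOp_xv_of_ne j hj _ (by omega) (by omega)) (sOp_one_sub_cv i hi tt)
    (sOp_one_sub_cv j hj tt) (xv_mk_ne_xv_mk _ _ (by omega)) (xv_mk_ne_xv_mk _ _ (by omega))
    (sOp_comm i j hi hj hij f)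

end PermutationAction

/-- The Demazure–Lusztig operators satisfy the braid relations:
`T_i T_{i+1} T_i = T_{i+1} T_i T_{i+1}` and `T_i T_j = T_j T_i` for `|i−j| > 1`. -/
theorem demazure_lusztig_braid {n : ℕ} :
    (∀ (i : ℕ) (h : i + 2 < n) (f : KK n),
      TOp i (Nat.lt_of_succ_lt h) (TOp (i + 1) h (TOp i (Nat.lt_of_succ_lt h) f)) =
        TOp (i + 1) h (TOp i (Nat.lt_of_succ_lt h) (TOp (i + 1) h f))) ∧
    (∀ (i j : ℕ) (hi : i + 1 < n) (hj : j + 1 < n), i + 1 < j ∨ j + 1 < i →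
      ∀ f : KK n, TOp i hi (TOp j hj f) = TOp j hj (TOp i hi f)) :=
  ⟨TOp_braid, TOp_comm⟩

end
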